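/- Let ρ_sc(x) = (1/2π)√((4−x²)₊) be the semicircle density. For any x with |x| ≤ 2 + η and any r > 0 with the exclusion region C·η^{2/3} ⊂ (0, ∞), there is a constant c > 0 (uniform in x) such that ∫_{|x−γ| ≥ C η^{2/3}} ρ_sc(γ)/(x−γ)² dγ ≥ c η^{−1/3}, for all sufficiently small η > 0. -/

import Mathlib

open MeasureTheory Real

noncomputable def rhoSC (x : ℝ) : ℝ := (1 / (2 * Real.pi)) * Real.sqrt (max (4 - x ^ 2) 0)

lemma rhoSC_nonneg (γ : ℝ) : 0 ≤ rhoSC γ := by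
  unfold rhoSC; positivity

lemma rhoSC_le (γ : ℝ) : rhoSC γ ≤ 1 / Real.pi := by
  unfold rhoSC
  have h1 : Real.sqrt (max (4 - γ ^ 2) 0) ≤ 2 := by
    have : max (4 - γ ^ 2) 0 ≤ 4 := by
      apply max_le (by nlinarith [sq_nonneg γ]) (by norm_num)
    calc Real.sqrt (max (4 - γ ^ 2) 0) ≤ Real.sqrt 4 := Real.sqrt_le_sqrt this
      _ = 2 := by rw [show (4:ℝ) = 2^2 by norm_num, Real.sqrt_sq (by norm_num)]
  have hπ := Real.pi_pos
  calc (1 / (2 * Real.pi)) * Real.sqrt (max (4 - γ ^ 2) 0)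
      ≤ (1 / (2 * Real.pi)) * 2 := by
        apply mul_le_mul_of_nonneg_left h1 (by positivity)
    _ = 1 / Real.pi := by field_simp
  
lemma rhoSC_eq_zero {γ : ℝ} (h : γ ∉ Set.Icc (-2:ℝ) 2) : rhoSC γ = 0 := by
  have h2 : 4 - γ ^ 2 ≤ 0 := by
    simp only [Set.mem_Icc, not_and_or, not_le] at h
    rcases h with h | h <;> nlinarith
  unfold rhoSC
  rw [max_eq_right h2, Real.sqrt_zero, mul_zero]

lemma rhoSC_measurable : Measurable rhoSC := by
  unfold rhoSC
  exact (measurable_const.mul ((Real.continuous_sqrt.measurable).comp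
    (((continuous_const.sub (continuous_pow 2)).max continuous_const).measurable)))

lemma aux_bound (D η x a r : ℝ) (hD : 1 ≤ D) (hη : 0 < η) (hr : 0 < r)
    (hrδ : r ≤ D * η ^ ((2:ℝ)/3))
    (hsub : Set.Icc a (a + D * η ^ ((2:ℝ)/3)) ⊆ Set.Icc (-2) 2)
    (hdist : ∀ γ ∈ Set.Icc a (a + D * η ^ ((2:ℝ)/3)),
      D * η ^ ((2:ℝ)/3) ≤ |x - γ| ∧ |x - γ| ≤ 2 * (D * η ^ ((2:ℝ)/3)))
    (hrho : ∀ γ ∈ Set.Icc a (a + D * η ^ ((2:ℝ)/3)),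
      (D/2) * η ^ ((2:ℝ)/3) ≤ 4 - γ ^ 2) :
    (Real.sqrt (D/2) / (8 * Real.pi * D)) * η ^ (-(1:ℝ)/3) ≤
      ∫ γ in {γ : ℝ | r ≤ |x - γ|}, rhoSC γ / (x - γ) ^ 2 := by
  have hπ := Real.pi_pos
  set δ : ℝ := D * η ^ ((2:ℝ)/3) with hδdef
  have hδpos : 0 < δ := by positivity
  set f : ℝ → ℝ := fun γ => rhoSC γ / (x - γ) ^ 2 with hfdef
  have hf0 : ∀ γ, 0 ≤ f γ := fun γ => div_nonneg (rhoSC_nonneg γ) (sq_nonneg _)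
  have hfm : Measurable f :=
    rhoSC_measurable.div (((continuous_const.sub continuous_id).pow 2).measurable)
  set S : Set ℝ := {γ : ℝ | r ≤ |x - γ|} with hSdef
  have hSmeas : MeasurableSet S := by
    have : S = (fun γ => |x - γ|) ⁻¹' (Set.Ici r) := rfl
    rw [this]
    exact (continuous_abs.comp (continuous_const.sub continuous_id)).measurable
      measurableSet_Ici
  set T : Set ℝ := S ∩ Set.Icc (-2:ℝ) 2 with hTdef
  have hTmeas : MeasurableSet T := hSmeas.inter measurableSet_Icc
  -- step 1: reduce the integral to T
  have step1 : ∫ γ in S, f γ = ∫ γ in T, f γ := by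
    have hind : ∀ γ, f γ = (Set.Icc (-2:ℝ) 2).indicator f γ := by
      intro γ
      by_cases h : γ ∈ Set.Icc (-2:ℝ) 2
      · rw [Set.indicator_of_mem h]
      · rw [Set.indicator_of_notMem h]
        simp only [hfdef, rhoSC_eq_zero h, zero_div]
    calc ∫ γ in S, f γ = ∫ γ in S, (Set.Icc (-2:ℝ) 2).indicator f γ := by
          exact integral_congr_ae (Filter.Eventually.of_forall (fun γ => hind γ))
      _ = ∫ γ in T, f γ := setIntegral_indicator measurableSet_Icc
  -- step 2: integrability on T
  have hTfin : volume T ≠ ⊤ :=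
    ((measure_mono Set.inter_subset_right).trans_lt measure_Icc_lt_top).ne
  have step2 : IntegrableOn f T := by
    apply Measure.integrableOn_of_bounded (M := (1 / Real.pi) / r ^ 2) hTfin
      hfm.aestronglyMeasurable
    rw [ae_restrict_iff' hTmeas]
    apply Filter.Eventually.of_forall
    intro γ hγ
    rw [Real.norm_eq_abs, abs_of_nonneg (hf0 γ)]
    have hγS : r ≤ |x - γ| := hγ.1
    have hden : r ^ 2 ≤ (x - γ) ^ 2 := by
      rw [← sq_abs (x - γ)]
      exact pow_le_pow_left₀ hr.le hγS 2
    exact div_le_div₀ (by positivity) (rhoSC_le γ) (by positivity) hden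
  -- step 3: the interval is contained in T
  set I : Set ℝ := Set.Icc a (a + δ) with hIdef
  have step3 : I ⊆ T := by
    intro γ hγ
    refine ⟨?_, hsub hγ⟩
    exact le_trans hrδ (hdist γ hγ).1
  -- step 4: monotonicity
  have step4 : ∫ γ in I, f γ ≤ ∫ γ in T, f γ :=
    setIntegral_mono_set step2 (Filter.Eventually.of_forall (fun γ => hf0 γ))
      (HasSubset.Subset.eventuallyLE step3)
  -- step 5: constant lower bound on I
  set m : ℝ := ((1 / (2 * Real.pi)) * Real.sqrt ((D/2) * η ^ ((2:ℝ)/3))) / (2 * δ) ^ 2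
    with hmdef
  have hpt : ∀ γ ∈ I, m ≤ f γ := by
    intro γ hγ
    have h1 : Real.sqrt ((D/2) * η ^ ((2:ℝ)/3)) ≤ Real.sqrt (max (4 - γ ^ 2) 0) :=
      Real.sqrt_le_sqrt (le_trans (hrho γ hγ) (le_max_left _ _))
    have hnum : (1 / (2 * Real.pi)) * Real.sqrt ((D/2) * η ^ ((2:ℝ)/3)) ≤ rhoSC γ := by
      unfold rhoSC
      exact mul_le_mul_of_nonneg_left h1 (by positivity)
    have hd1 : δ ≤ |x - γ| := (hdist γ hγ).1
    have hd2 : |x - γ| ≤ 2 * δ := (hdist γ hγ).2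
    have hdenpos : 0 < (x - γ) ^ 2 := by
      rw [← sq_abs]; exact pow_pos (lt_of_lt_of_le hδpos hd1) 2
    have hdenle : (x - γ) ^ 2 ≤ (2 * δ) ^ 2 := by
      rw [← sq_abs]
      exact pow_le_pow_left₀ (abs_nonneg _) hd2 2
    exact div_le_div₀ (rhoSC_nonneg γ) hnum hdenpos hdenle
  have step5 : m * δ ≤ ∫ γ in I, f γ := by
    have := setIntegral_ge_of_const_le_real (μ := volume) measurableSet_Icc
      measure_Icc_lt_top.ne hpt (step2.mono_set step3)
    rwa [measureReal_def, Real.volume_Icc, show a + δ - a = δ by ring, ENNReal.toReal_ofReal hδpos.le]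
      at this
  -- step 6: compute m * δ
  have hD0 : (0:ℝ) < D := lt_of_lt_of_le one_pos hD
  have e1 : Real.sqrt ((D/2) * η ^ ((2:ℝ)/3)) = Real.sqrt (D/2) * η ^ ((1:ℝ)/3) := by
    rw [Real.sqrt_mul (by positivity), Real.sqrt_eq_rpow (η ^ ((2:ℝ)/3)), ← Real.rpow_mul hη.le]
    norm_num
  have e2 : (η ^ ((2:ℝ)/3)) ^ 2 = η ^ ((4:ℝ)/3) := by
    rw [← Real.rpow_natCast (η ^ ((2:ℝ)/3)) 2, ← Real.rpow_mul hη.le]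
    norm_num
  have e3 : η ^ (-(1:ℝ)/3)
      = η ^ ((1:ℝ)/3) * η ^ ((2:ℝ)/3) * (η ^ ((4:ℝ)/3))⁻¹ := by
    rw [← Real.rpow_neg hη.le, ← Real.rpow_add hη, ← Real.rpow_add hη]
    norm_num
  have hE : (0:ℝ) < η ^ ((4:ℝ)/3) := Real.rpow_pos_of_pos hη _
  have key : (Real.sqrt (D/2) / (8 * Real.pi * D)) * η ^ (-(1:ℝ)/3) = m * δ := by
    rw [e3, hmdef, hδdef, e1]
    have : (2 * (D * η ^ ((2:ℝ)/3))) ^ 2 = 4 * D ^ 2 * η ^ ((4:ℝ)/3) := by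
      rw [mul_pow, mul_pow, e2]; ring
    rw [this]
    field_simp
    ring
  rw [step1, key]
  exact le_trans step5 step4

/-- Convexity lower bound for the mean-field potential: for `|x| ≤ 2 + η`,
the integral of `ρ_sc(γ)/(x−γ)²` over `|x−γ| ≥ C η^{2/3}` is at least
`c η^{−1/3}` for all sufficiently small `η > 0`, with `c` uniform in `x`. -/
theorem semicircle_convexity_bound (C : ℝ) (hC : 0 < C) :
    ∃ c : ℝ, 0 < c ∧ ∃ η₀ : ℝ, 0 < η₀ ∧
      ∀ η : ℝ, 0 < η → η < η₀ → ∀ x : ℝ, |x| ≤ 2 + η →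
        c * η ^ (-(1 : ℝ) / 3) ≤
          ∫ γ in {γ : ℝ | C * η ^ ((2 : ℝ) / 3) ≤ |x - γ|},
            rhoSC γ / (x - γ) ^ 2 := by
  have hπ := Real.pi_pos
  set D : ℝ := max C 1 with hDdef
  have hD : 1 ≤ D := le_max_right _ _
  have hCD : C ≤ D := le_max_left _ _
  have hD0 : (0:ℝ) < D := lt_of_lt_of_le one_pos hD
  have hsqrt : 0 < Real.sqrt (D/2) := Real.sqrt_pos.mpr (by positivity)
  refine ⟨Real.sqrt (D/2) / (8 * Real.pi * D), by positivity,
    min (1/8) ((2*D)⁻¹ ^ 2), by positivity, ?_⟩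
  intro η hη hηlt x hx
  -- smallness facts
  have hη18 : η ≤ 1/8 := le_of_lt (lt_of_lt_of_le hηlt (min_le_left _ _))
  have hη2D : η ≤ (2*D)⁻¹ ^ 2 := le_of_lt (lt_of_lt_of_le hηlt (min_le_right _ _))
  have h13 : η ^ ((1:ℝ)/3) ≤ 1/2 := by
    calc η ^ ((1:ℝ)/3) ≤ (1/8 : ℝ) ^ ((1:ℝ)/3) :=
          Real.rpow_le_rpow hη.le hη18 (by norm_num)
      _ = 1/2 := by
          rw [show (1/8:ℝ) = (1/2) ^ (3:ℕ) by norm_num,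
            ← Real.rpow_natCast ((1:ℝ)/2) 3, ← Real.rpow_mul (by norm_num)]
          norm_num
  have hb0 : (0:ℝ) < (2*D)⁻¹ := by positivity
  have hb1 : (2*D)⁻¹ ≤ 1 := by
    rw [inv_le_one_iff₀]; right; linarith
  have h23 : η ^ ((2:ℝ)/3) ≤ (2*D)⁻¹ := by
    calc η ^ ((2:ℝ)/3) ≤ ((2*D)⁻¹ ^ 2) ^ ((2:ℝ)/3) :=
          Real.rpow_le_rpow hη.le hη2D (by norm_num)
      _ = (2*D)⁻¹ ^ ((4:ℝ)/3) := by
          rw [← Real.rpow_natCast ((2*D)⁻¹) 2, ← Real.rpow_mul hb0.le]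
          norm_num
      _ ≤ (2*D)⁻¹ ^ (1:ℝ) :=
          Real.rpow_le_rpow_of_exponent_ge hb0 hb1 (by norm_num)
      _ = (2*D)⁻¹ := Real.rpow_one _
  set δ : ℝ := D * η ^ ((2:ℝ)/3) with hδdef
  have hδpos : 0 < δ := by positivity
  have hδhalf : δ ≤ 1/2 := by
    calc δ ≤ D * (2*D)⁻¹ := mul_le_mul_of_nonneg_left h23 hD0.le
      _ = 1/2 := by field_simp
  have hηδ : η ≤ δ/2 := by
    have heq : η = η ^ ((1:ℝ)/3) * η ^ ((2:ℝ)/3) := by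
      rw [← Real.rpow_add hη]; norm_num
    have h1 : η ^ ((1:ℝ)/3) * η ^ ((2:ℝ)/3) ≤ (1/2) * η ^ ((2:ℝ)/3) :=
      mul_le_mul_of_nonneg_right h13 (Real.rpow_nonneg hη.le _)
    have h2 : (1/2 : ℝ) * η ^ ((2:ℝ)/3) ≤ (D/2) * η ^ ((2:ℝ)/3) := by
      apply mul_le_mul_of_nonneg_right (by linarith) (Real.rpow_nonneg hη.le _)
    calc η = η ^ ((1:ℝ)/3) * η ^ ((2:ℝ)/3) := heq
      _ ≤ (D/2) * η ^ ((2:ℝ)/3) := le_trans h1 h2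
      _ = δ/2 := by rw [hδdef]; ring
  have hrδ : C * η ^ ((2:ℝ)/3) ≤ δ := by
    rw [hδdef]
    exact mul_le_mul_of_nonneg_right hCD (Real.rpow_nonneg hη.le _)
  have hrpos : 0 < C * η ^ ((2:ℝ)/3) := by positivity
  have hx2 : x ≤ 2 + η := le_trans (le_abs_self x) hx
  have hx2' : -(2 + η) ≤ x := neg_le_of_abs_le hx
  rcases le_or_gt 0 x with hxpos | hxneg
  · -- interval to the left of x
    apply aux_bound D η x (x - 2*δ) _ hD hη hrpos hrδ
    · intro γ hγ
      obtain ⟨h1, h2⟩ := hγ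
      have h2' : γ ≤ x - δ := by rw [show x - 2*δ + δ = x - δ by ring] at h2; exact h2
      simp only [Set.mem_Icc]
      constructor
      · linarith
      · linarith
    · intro γ hγ
      obtain ⟨h1, h2⟩ := hγ
      have h2' : γ ≤ x - δ := by rw [show x - 2*δ + δ = x - δ by ring] at h2; exact h2
      have hxγ : δ ≤ x - γ := by linarith
      rw [abs_of_nonneg (by linarith : (0:ℝ) ≤ x - γ)]
      constructor
      · exact hxγ
      · linarith
    · intro γ hγ
      obtain ⟨h1, h2⟩ := hγ
      have h2' : γ ≤ x - δ := by rw [show x - 2*δ + δ = x - δ by ring] at h2; exact h2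
      have ha : δ/2 ≤ 2 - γ := by linarith
      have hb : (1:ℝ) ≤ 2 + γ := by linarith
      have : δ/2 * 1 ≤ (2 - γ) * (2 + γ) :=
        mul_le_mul ha hb zero_le_one (by linarith)
      calc (D/2) * η ^ ((2:ℝ)/3) = δ/2 * 1 := by rw [hδdef]; ring
        _ ≤ (2 - γ) * (2 + γ) := this
        _ = 4 - γ ^ 2 := by ring
  · -- interval to the right of x
    apply aux_bound D η x (x + δ) _ hD hη hrpos hrδ
    · intro γ hγ
      obtain ⟨h1, h2⟩ := hγ
      have h2' : γ ≤ x + 2*δ := by rw [show x + δ + δ = x + 2*δ by ring] at h2; exact h2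
      simp only [Set.mem_Icc]
      constructor
      · linarith
      · linarith
    · intro γ hγ
      obtain ⟨h1, h2⟩ := hγ
      have h2' : γ ≤ x + 2*δ := by rw [show x + δ + δ = x + 2*δ by ring] at h2; exact h2
      rw [abs_of_nonpos (by linarith : x - γ ≤ 0)]
      constructor
      · linarith
      · linarith
    · intro γ hγ
      obtain ⟨h1, h2⟩ := hγ
      have h2' : γ ≤ x + 2*δ := by rw [show x + δ + δ = x + 2*δ by ring] at h2; exact h2
      have ha : (1:ℝ) ≤ 2 - γ := by linarith
      have hb : δ/2 ≤ 2 + γ := by linarith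
      have : δ/2 * 1 ≤ (2 + γ) * (2 - γ) :=
        mul_le_mul hb ha zero_le_one (by linarith)
      calc (D/2) * η ^ ((2:ℝ)/3) = δ/2 * 1 := by rw [hδdef]; ring
        _ ≤ (2 + γ) * (2 - γ) := this
        _ = 4 - γ ^ 2 := by ring
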